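/- Under the multilayered sample selection model, suppose P(AE) > 0 and that there is no direct effect, i.e. for each d ∈ {1,…,K} there exists an integrable random variable Y_{•d} with Y_{1,d} = Y_{0,d} = Y_{•d} almost surely. Then E[Y_{1,D_1} − Y_{0,D_0} | AE] = Σ_{d=1}^{K} Σ_{d'=1, d'≠d}^{K} E[Y_{•d} − Y_{•d'} | D_0 = d', D_1 = d] · P(D_0 = d', D_1 = d | AE) = E[Y_{•D_1} − Y_{•D_0} | AE], where Y_{•D_z} := Σ_{d=1}^K Y_{•d}·1{D_z=d} and summands with zero type probability are interpreted as zero. -/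

import Mathlib

open MeasureTheory ProbabilityTheory

/-- `Y_{z,D_{z'}}(ω) = Σ_{d=1}^K Y_{z,d}(ω) · 1{D_{z'}(ω) = d}`. -/
noncomputable def YzD {Ω : Type*} (K : ℕ) (Y : ℕ → ℕ → Ω → ℝ) (z : ℕ) (Dz' : Ω → ℕ)
    (ω : Ω) : ℝ :=
  ∑ d ∈ Finset.Icc 1 K, Y z d ω * (if Dz' ω = d then 1 else 0)

/-- `Y_{•,D_z}(ω) = Σ_{d=1}^K Y_{•,d}(ω) · 1{D_z(ω) = d}` for a treatment-free
outcome family `Yd : ℕ → Ω → ℝ`. -/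
noncomputable def YdotD {Ω : Type*} (K : ℕ) (Yd : ℕ → Ω → ℝ) (Dz : Ω → ℕ) (ω : Ω) : ℝ :=
  ∑ d ∈ Finset.Icc 1 K, Yd d ω * (if Dz ω = d then 1 else 0)

/-! On the always-employed event both `D₀` and `D₁` lie in `{1, …, K}`, so by the absence of a
direct effect the integrand is `Y_{•D₁} − Y_{•D₀}`, which is `Y_{•d} − Y_{•d'}` on the type
`{D₀ = d', D₁ = d}` and vanishes on the diagonal types `d = d'`. Splitting the conditional
expectation over these types and factoring each piece as a conditional expectation given the type
times its conditional probability gives the sorting sum. -/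

section Conditioning

variable {Ω E : Type*} [MeasurableSpace Ω] [NormedAddCommGroup E]
  {μ : Measure Ω} {s t : Set Ω}

theorem integrable_cond {f : Ω → E} (hf : Integrable f μ) : Integrable f μ[|s] := by
  by_cases hs : μ s = 0
  · rw [cond_eq_zero_of_meas_eq_zero hs]
    exact integrable_zero_measure
  · exact hf.restrict.smul_measure (ENNReal.inv_ne_top.mpr hs)

theorem restrict_eq_measure_smul_cond [IsFiniteMeasure μ] : μ.restrict t = μ t • μ[|t] := by
  by_cases ht : μ t = 0
  · simp [ht]
  · rw [ProbabilityTheory.cond, smul_smul, ENNReal.mul_inv_cancel ht (measure_ne_top μ t), one_smul]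

theorem integral_indicator_cond_of_subset [NormedSpace ℝ E] [IsFiniteMeasure μ]
    (hs : MeasurableSet s) (ht : MeasurableSet t) (hts : t ⊆ s) (f : Ω → E) :
    ∫ x, t.indicator f x ∂μ[|s] = (μ[|s] t).toReal • ∫ x, f x ∂μ[|t] := by
  rw [integral_indicator ht, restrict_eq_measure_smul_cond, integral_smul_measure, cond_cond_eq_cond_inter hs ht,
    Set.inter_eq_right.mpr hts]

end Conditioning

theorem sub_eq_sum_sum_erase_ite {α M : Type*} [DecidableEq α] [AddCommGroup M] {s : Finset α}
    {x y : α} (hx : x ∈ s) (hy : y ∈ s) (f : α → M) :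
    f x - f y = ∑ d ∈ s, ∑ d' ∈ s.erase d, if y = d' ∧ x = d then f d - f d' else 0 := by
  rw [Finset.sum_eq_single_of_mem x hx fun d _ hdx =>
    Finset.sum_eq_zero fun d' _ => if_neg fun h => hdx h.2.symm]
  by_cases hyx : y = x
  · simp [hyx]
  · simp [hyx, hy]

theorem YdotD_eq_of_mem {Ω : Type*} {K : ℕ} {Yd : ℕ → Ω → ℝ} {D : Ω → ℕ} {ω : Ω}
    (h : D ω ∈ Finset.Icc 1 K) : YdotD K Yd D ω = Yd (D ω) ω := by
  simp [YdotD, h]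

theorem YzD_ae_eq_YdotD {Ω : Type*} [MeasurableSpace Ω] {μ : Measure Ω} {K : ℕ}
    {Y : ℕ → ℕ → Ω → ℝ} {Yd : ℕ → Ω → ℝ} {z : ℕ} (D : Ω → ℕ)
    (h : ∀ d ∈ Finset.Icc 1 K, Y z d =ᵐ[μ] Yd d) : YzD K Y z D =ᵐ[μ] YdotD K Yd D := by
  filter_upwards [(Filter.eventually_all_finset _).2 h] with ω hω
  exact Finset.sum_congr rfl fun d hd => by rw [hω d hd]

theorem YdotD_sub_YdotD_eq_sum_indicator {Ω : Type*} {K : ℕ} {Yd : ℕ → Ω → ℝ} {D0 D1 : Ω → ℕ}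
    {ω : Ω} (hD0 : D0 ω ∈ Finset.Icc 1 K) (hD1 : D1 ω ∈ Finset.Icc 1 K) :
    YdotD K Yd D1 ω - YdotD K Yd D0 ω
      = ∑ d ∈ Finset.Icc 1 K, ∑ d' ∈ (Finset.Icc 1 K).erase d,
          {ω | D0 ω = d' ∧ D1 ω = d}.indicator (fun ω => Yd d ω - Yd d' ω) ω := by
  rw [YdotD_eq_of_mem hD1, YdotD_eq_of_mem hD0, sub_eq_sum_sum_erase_ite hD1 hD0 fun d => Yd d ω]
  simp only [Set.indicator_apply, Set.mem_ofPred_eq]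

theorem integral_cond_YdotD_sub_eq_sum {Ω : Type*} [MeasurableSpace Ω] (P : Measure Ω)
    [IsFiniteMeasure P] {K : ℕ} {D0 D1 : Ω → ℕ} (hD0m : Measurable D0) (hD1m : Measurable D1)
    (hD0K : ∀ ω, D0 ω ≤ K) (hD1K : ∀ ω, D1 ω ≤ K) {Yd : ℕ → Ω → ℝ}
    (hYdint : ∀ d ∈ Finset.Icc 1 K, Integrable (Yd d) P) :
    ∫ ω, (YdotD K Yd D1 ω - YdotD K Yd D0 ω) ∂(P[|{ω | 0 < D0 ω ∧ 0 < D1 ω}])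
      = ∑ d ∈ Finset.Icc 1 K, ∑ d' ∈ (Finset.Icc 1 K).erase d,
          (∫ ω, (Yd d ω - Yd d' ω) ∂(P[|{ω | D0 ω = d' ∧ D1 ω = d}]))
            * ((P[|{ω | 0 < D0 ω ∧ 0 < D1 ω}]) {ω | D0 ω = d' ∧ D1 ω = d}).toReal := by
  set S : Set Ω := {ω | 0 < D0 ω ∧ 0 < D1 ω}
  set A : ℕ → ℕ → Set Ω := fun d d' => {ω | D0 ω = d' ∧ D1 ω = d}
  have hSm : MeasurableSet S :=
    (measurableSet_lt measurable_const hD0m).inter (measurableSet_lt measurable_const hD1m)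
  have hAm (d d' : ℕ) : MeasurableSet (A d d') :=
    (hD0m (measurableSet_singleton d')).inter (hD1m (measurableSet_singleton d))
  have hint (d d' : ℕ) (hd : d ∈ Finset.Icc 1 K) (hd' : d' ∈ (Finset.Icc 1 K).erase d) :
      Integrable ((A d d').indicator fun ω => Yd d ω - Yd d' ω) P[|S] :=
    integrable_cond (((hYdint d hd).sub (hYdint d' (Finset.mem_of_mem_erase hd'))).indicator
      (hAm d d'))
  have hsorting : ∀ᵐ ω ∂P[|S], YdotD K Yd D1 ω - YdotD K Yd D0 ω
      = ∑ d ∈ Finset.Icc 1 K, ∑ d' ∈ (Finset.Icc 1 K).erase d,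
          (A d d').indicator (fun ω => Yd d ω - Yd d' ω) ω := by
    filter_upwards [ae_cond_mem hSm] with ω ⟨h0, h1⟩
    exact YdotD_sub_YdotD_eq_sum_indicator (Finset.mem_Icc.2 ⟨h0, hD0K ω⟩)
      (Finset.mem_Icc.2 ⟨h1, hD1K ω⟩)
  rw [integral_congr_ae hsorting,
    integral_finsetSum _ fun d hd => integrable_finsetSum _ (hint d · hd)]
  refine Finset.sum_congr rfl fun d hd => ?_
  rw [integral_finsetSum _ (hint d · hd)]
  refine Finset.sum_congr rfl fun d' hd' => ?_
  have hAS : A d d' ⊆ S := by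
    rintro ω ⟨rfl, rfl⟩
    exact ⟨(Finset.mem_Icc.1 (Finset.mem_of_mem_erase hd')).1, (Finset.mem_Icc.1 hd).1⟩
  rw [integral_indicator_cond_of_subset hSm (hAm d d') hAS, smul_eq_mul, mul_comm]

theorem no_direct_effect_decomposition
    {Ω : Type*} [MeasurableSpace Ω] (P : Measure Ω) [IsProbabilityMeasure P]
    (K : ℕ)
    (D0 D1 : Ω → ℕ)
    (hD0m : Measurable D0) (hD1m : Measurable D1)
    (hD0K : ∀ ω, D0 ω ≤ K) (hD1K : ∀ ω, D1 ω ≤ K)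
    (Y : ℕ → ℕ → Ω → ℝ)
    (Yd : ℕ → Ω → ℝ)
    (hYdint : ∀ d, 1 ≤ d → d ≤ K → Integrable (Yd d) P)
    (hNoDir : ∀ z ≤ 1, ∀ d, 1 ≤ d → d ≤ K → Y z d =ᵐ[P] Yd d) :
    (∫ ω, (YzD K Y 1 D1 ω - YzD K Y 0 D0 ω) ∂(P[|{ω | 0 < D0 ω ∧ 0 < D1 ω}])
      = ∑ d ∈ Finset.Icc 1 K, ∑ d' ∈ (Finset.Icc 1 K).erase d,
          (∫ ω, (Yd d ω - Yd d' ω) ∂(P[|{ω | D0 ω = d' ∧ D1 ω = d}]))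
            * ((P[|{ω | 0 < D0 ω ∧ 0 < D1 ω}]) {ω | D0 ω = d' ∧ D1 ω = d}).toReal)
    ∧ (∫ ω, (YzD K Y 1 D1 ω - YzD K Y 0 D0 ω) ∂(P[|{ω | 0 < D0 ω ∧ 0 < D1 ω}])
      = ∫ ω, (YdotD K Yd D1 ω - YdotD K Yd D0 ω) ∂(P[|{ω | 0 < D0 ω ∧ 0 < D1 ω}])) := by
  have hNoDirS (z : ℕ) (hz : z ≤ 1) :
      ∀ d ∈ Finset.Icc 1 K, Y z d =ᵐ[P[|{ω | 0 < D0 ω ∧ 0 < D1 ω}]] Yd d :=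
    fun d hd => cond_absolutelyContinuous.ae_eq <|
      hNoDir z hz d (Finset.mem_Icc.1 hd).1 (Finset.mem_Icc.1 hd).2
  have hdirect : ∫ ω, (YzD K Y 1 D1 ω - YzD K Y 0 D0 ω) ∂(P[|{ω | 0 < D0 ω ∧ 0 < D1 ω}])
      = ∫ ω, (YdotD K Yd D1 ω - YdotD K Yd D0 ω) ∂(P[|{ω | 0 < D0 ω ∧ 0 < D1 ω}]) :=
    integral_congr_ae ((YzD_ae_eq_YdotD D1 (hNoDirS 1 le_rfl)).sub
      (YzD_ae_eq_YdotD D0 (hNoDirS 0 zero_le_one)))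
  refine ⟨hdirect.trans ?_, hdirect⟩
  exact integral_cond_YdotD_sub_eq_sum P hD0m hD1m hD0K hD1K fun d hd =>
    hYdint d (Finset.mem_Icc.1 hd).1 (Finset.mem_Icc.1 hd).2
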